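/- arXiv:1111.0608 — 2 statements merged into one kernel-verified Lean document; each statement's English description precedes it below -/
import Mathlib

section
/- Let N ≥ 1, let a_0 = 1 < a_1 < a_2 < ⋯ < a_N be real numbers, and let m(𝐚) be the least natural number m such that ∑_{k=0}^{N-1} (a_k/a_N)^m < 1. If f : ℝ → ℝ is k-times continuously differentiable on ℝ with k ≥ m(𝐚) and satisfies f(x) + f(a_1 x) + ⋯ + f(a_N x) = 0 for all x ∈ ℝ, then f = 0. In particular, f = 0 is the unique C^∞ solution of this equation on the whole real line. -/
/-!
Differentiating the equation `i` times gives `∑ⱼ aⱼ^i f⁽ⁱ⁾(aⱼ x) = 0`. At `x = 0` this forces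
`f⁽ⁱ⁾(0) = 0`, since all `aⱼ` are positive. For `i = m = m(𝐚)`, dividing by `a_N^m` expresses
`f⁽ᵐ⁾(y)` as a combination of the values `f⁽ᵐ⁾(bⱼ y)`, `bⱼ = aⱼ / a_N ∈ (0, 1)`, with weights of
total size `∑ bⱼ^m < 1`; evaluating at a maximum point of `|f⁽ᵐ⁾|` on `[-|y|, |y|]` shows that
`f⁽ᵐ⁾` vanishes. So `f` is a polynomial of degree `< m` all of whose derivatives vanish at `0`.
-/

open Finset Filter Topology

theorem eq_zero_of_iteratedDeriv_eq_zero {𝕜 G : Type*} [RCLike 𝕜] [NormedAddCommGroup G]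
    [NormedSpace 𝕜 G] {n : ℕ} {f : 𝕜 → G} (hf : ContDiff 𝕜 n f) (hn : iteratedDeriv n f = 0)
    (x₀ : 𝕜) (h₀ : ∀ i < n, iteratedDeriv i f x₀ = 0) : f = 0 := by
  induction n generalizing f with
  | zero => simpa using hn
  | succ n ih =>
    rw [Nat.cast_add_one] at hf
    obtain ⟨hdiff, -, hderiv⟩ := contDiff_succ_iff_deriv.mp hf
    have hf' : deriv f = 0 :=
      ih hderiv (by rwa [← iteratedDeriv_succ']) fun i hi => by
        simpa only [← iteratedDeriv_succ'] using h₀ (i + 1) (by omega)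
    funext x
    rw [is_const_of_deriv_eq_zero hdiff (congrFun hf') x x₀]
    simpa using h₀ 0 n.succ_pos

theorem iteratedDeriv_sum_comp_const_mul {𝕜 F ι : Type*} [NontriviallyNormedField 𝕜]
    [NormedAddCommGroup F] [NormedSpace 𝕜 F] (s : Finset ι) (c : ι → 𝕜) {n : ℕ} {f : 𝕜 → F}
    (hf : ContDiff 𝕜 n f) :
    iteratedDeriv n (fun x => ∑ j ∈ s, f (c j * x)) =
      fun x => ∑ j ∈ s, c j ^ n • iteratedDeriv n f (c j * x) := by
  funext x
  rw [iteratedDeriv_fun_sum (f := fun j x => f (c j * x))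
    fun j _ => (hf.comp (contDiff_const.mul contDiff_id)).contDiffAt]
  exact sum_congr rfl fun j _ => congrFun (iteratedDeriv_comp_const_smul hf (c j)) x

theorem sum_pow_smul_iteratedDeriv_comp_mul_eq_zero {𝕜 F ι : Type*} [NontriviallyNormedField 𝕜]
    [NormedAddCommGroup F] [NormedSpace 𝕜 F] (s : Finset ι) (c : ι → 𝕜) {n : ℕ} {f : 𝕜 → F}
    (hf : ContDiff 𝕜 n f) (heq : ∀ x, ∑ j ∈ s, f (c j * x) = 0) (x : 𝕜) :
    ∑ j ∈ s, c j ^ n • iteratedDeriv n f (c j * x) = 0 := by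
  rw [← congrFun (iteratedDeriv_sum_comp_const_mul s c hf) x, funext heq]
  simp

theorem eq_zero_of_eq_sum_smul_comp_smul {V E ι : Type*} [NormedAddCommGroup V]
    [NormedSpace ℝ V] [ProperSpace V] [NormedAddCommGroup E] [NormedSpace ℝ E] (s : Finset ι)
    {b c : ι → ℝ} (hb : ∀ j ∈ s, |b j| ≤ 1) (hc : ∑ j ∈ s, |c j| < 1) {g : V → E}
    (hg : Continuous g) (h : ∀ y, g y = ∑ j ∈ s, c j • g (b j • y)) : g = 0 := by
  funext y
  obtain ⟨t, ht, hmax⟩ := (isCompact_closedBall (0 : V) ‖y‖).exists_isMaxOn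
    ⟨y, mem_closedBall_zero_iff.mpr le_rfl⟩ hg.norm.continuousOn
  have hself : ‖g t‖ ≤ (∑ j ∈ s, |c j|) * ‖g t‖ := calc
    ‖g t‖ = ‖∑ j ∈ s, c j • g (b j • t)‖ := by rw [← h]
    _ ≤ ∑ j ∈ s, ‖c j • g (b j • t)‖ := norm_sum_le _ _
    _ ≤ ∑ j ∈ s, |c j| * ‖g t‖ := by
      refine sum_le_sum fun j hj => ?_
      rw [norm_smul, Real.norm_eq_abs]
      refine mul_le_mul_of_nonneg_left (hmax (mem_closedBall_zero_iff.mpr ?_)) (abs_nonneg _)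
      calc ‖b j • t‖ = |b j| * ‖t‖ := by rw [norm_smul, Real.norm_eq_abs]
        _ ≤ 1 * ‖y‖ :=
          mul_le_mul (hb j hj) (mem_closedBall_zero_iff.mp ht) (norm_nonneg _) zero_le_one
        _ = ‖y‖ := one_mul _
    _ = (∑ j ∈ s, |c j|) * ‖g t‖ := (sum_mul _ _ _).symm
  have hgt : ‖g t‖ = 0 := by nlinarith [norm_nonneg (g t)]
  have hgy : ‖g y‖ ≤ ‖g t‖ := hmax (mem_closedBall_zero_iff.mpr le_rfl)
  exact norm_le_zero_iff.mp (hgt ▸ hgy)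

theorem eq_zero_of_sum_comp_mul_eq_zero {N m : ℕ} {a : ℕ → ℝ} (ha : ∀ j ≤ N, 0 < a j)
    (hle : ∀ j < N, a j ≤ a N) (hm : ∑ j ∈ range N, (a j / a N) ^ m < 1) {f : ℝ → ℝ}
    (hf : ContDiff ℝ m f) (heq : ∀ x, ∑ j ∈ range (N + 1), f (a j * x) = 0) : f = 0 := by
  have haN : 0 < a N := ha N le_rfl
  have hder : ∀ i ≤ m, ∀ x, ∑ j ∈ range (N + 1), a j ^ i * iteratedDeriv i f (a j * x) = 0 := by
    intro i hi
    simpa only [smul_eq_mul] using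
      sum_pow_smul_iteratedDeriv_comp_mul_eq_zero _ a (hf.of_le (by exact_mod_cast hi)) heq
  refine eq_zero_of_iteratedDeriv_eq_zero hf ?_ 0 fun i hi => ?_
  · refine eq_zero_of_eq_sum_smul_comp_smul (range N) (b := fun j => a j / a N)
      (c := fun j => -(a j / a N) ^ m) (fun j hj => ?_) ?_ (hf.continuous_iteratedDeriv m le_rfl)
      fun y => ?_
    · have hj := mem_range.mp hj
      rw [abs_of_pos (div_pos (ha j hj.le) haN)]
      exact div_le_one_of_le₀ (hle j hj) haN.le
    · simp only [abs_neg, abs_pow]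
      rwa [sum_congr rfl fun j hj =>
        by rw [abs_of_pos (div_pos (ha j (mem_range.mp hj).le) haN)]]
    · have h := hder m le_rfl (y / a N)
      rw [sum_range_succ, mul_div_cancel₀ y haN.ne'] at h
      have hy : ∀ j, a j / a N * y = a j * (y / a N) := fun j => by ring
      simp only [smul_eq_mul, hy, div_pow, neg_mul, sum_neg_distrib, div_mul_eq_mul_div, ← sum_div]
      rw [eq_neg_iff_add_eq_zero, add_div' _ _ _ (pow_ne_zero m haN.ne'), div_eq_zero_iff]
      exact Or.inl (by linarith)
  · have h := hder i hi.le 0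
    simp only [mul_zero, ← sum_mul] at h
    refine (mul_eq_zero.mp h).resolve_left (ne_of_gt ?_)
    exact sum_pos (fun j hj => pow_pos (ha j (Nat.lt_succ_iff.mp (mem_range.mp hj))) i)
      nonempty_range_add_one

theorem exists_sum_pow_lt_one {ι : Type*} (s : Finset ι) {b : ι → ℝ}
    (hb : ∀ j ∈ s, |b j| < 1) : ∃ m : ℕ, ∑ j ∈ s, b j ^ m < 1 := by
  have hlim : Tendsto (fun m : ℕ => ∑ j ∈ s, b j ^ m) atTop (𝓝 0) := by
    simpa using tendsto_finsetSum s fun j hj => tendsto_pow_atTop_nhds_zero_of_abs_lt_one (hb j hj)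
  exact (hlim.eventually_lt_const one_pos).exists

theorem stmt_2_general (N : ℕ) (a : ℕ → ℝ) (ha0 : a 0 = 1)
    (hmono : ∀ k, k < N → a k < a (k + 1)) (k : ℕ)
    (hk : sInf {m : ℕ | ∑ j ∈ Finset.range N, (a j / a N) ^ m < 1} ≤ k)
    (f : ℝ → ℝ) (hf : ContDiff ℝ (k : ℕ∞) f)
    (heq : ∀ x : ℝ, ∑ j ∈ Finset.range (N + 1), f (a j * x) = 0) :
    f = 0 ∧
      ∀ g : ℝ → ℝ, ContDiff ℝ (⊤ : ℕ∞) g →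
        (∀ x : ℝ, ∑ j ∈ Finset.range (N + 1), g (a j * x) = 0) → g = 0 := by
  have hstrict : StrictMonoOn a (Set.Iic N) :=
    strictMonoOn_Iic_of_lt_succ fun j hj => by simpa [Order.succ_eq_add_one] using hmono j hj
  have hpos : ∀ j ≤ N, 0 < a j := fun j hj =>
    zero_lt_one.trans_le (ha0.symm.le.trans (hstrict.monotoneOn N.zero_le hj j.zero_le))
  have hlt : ∀ j < N, a j < a N := fun j hj => hstrict hj.le (Set.mem_Iic.mpr le_rfl) hj
  have hS : {m : ℕ | ∑ j ∈ Finset.range N, (a j / a N) ^ m < 1}.Nonempty :=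
    exists_sum_pow_lt_one (range N) fun j hj => by
      have hj := mem_range.mp hj
      rw [abs_of_pos (div_pos (hpos j hj.le) (hpos N le_rfl))]
      exact (div_lt_one (hpos N le_rfl)).mpr (hlt j hj)
  have hzero : ∀ g : ℝ → ℝ, ContDiff ℝ (k : ℕ∞) g →
      (∀ x, ∑ j ∈ range (N + 1), g (a j * x) = 0) → g = 0 := fun g hg hgeq =>
    eq_zero_of_sum_comp_mul_eq_zero hpos (fun j hj => (hlt j hj).le) (Nat.sInf_mem hS)
      (hg.of_le (by exact_mod_cast hk)) hgeq
  exact ⟨hzero f hf heq, fun g hg hgeq => hzero g (hg.of_le (by exact_mod_cast le_top)) hgeq⟩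

/-- If `f : ℝ → ℝ` is `k`-times continuously differentiable with
`k ≥ m(𝐚)` and satisfies the functional equation on all of `ℝ`, then `f = 0`.
In particular `f = 0` is the unique `C^∞` solution on the real line. -/
theorem stmt_2 (N : ℕ) (hN : 1 ≤ N) (a : ℕ → ℝ) (ha0 : a 0 = 1)
    (hmono : ∀ k, k < N → a k < a (k + 1)) (k : ℕ)
    (hk : sInf {m : ℕ | ∑ j ∈ Finset.range N, (a j / a N) ^ m < 1} ≤ k)
    (f : ℝ → ℝ) (hf : ContDiff ℝ (k : ℕ∞) f)
    (heq : ∀ x : ℝ, ∑ j ∈ Finset.range (N + 1), f (a j * x) = 0) :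
    f = 0 ∧
      ∀ g : ℝ → ℝ, ContDiff ℝ (⊤ : ℕ∞) g →
        (∀ x : ℝ, ∑ j ∈ Finset.range (N + 1), g (a j * x) = 0) → g = 0 :=
  stmt_2_general N a ha0 hmono k hk f hf heq
end

section
/- Let a > 0 and b > 0. The equation g(x) + g(x + a) + g(x + b) = 0 (for all x ∈ ℝ) admits a continuous periodic solution g ≠ 0 (i.e., a nonzero continuous g : ℝ → ℝ for which there exists T > 0 with g(x + T) = g(x) for all x) if and only if a/b belongs to the set { (2+3k)/(1+3m) : (m,k) ∈ ℤ² } ∪ { (1+3m)/(2+3k) : (m,k) ∈ ℤ² }. -/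
/-!
A nonzero continuous `T`-periodic solution has a nonzero Fourier coefficient of some index `n`, and
translating by `a` multiplies that coefficient by `e(n a / T)`, where `e(t) = exp (2πit)`. So the
equation forces the characteristic relation `1 + e(ν a) + e(ν b) = 0` with `ν = n / T`; conversely
any real root `ν` of it yields the solution `x ↦ Re e(ν x)`. Two unit complex numbers `z, w` with
`1 + z + w = 0` are the two primitive cube roots of unity, so `3 ν a` and `3 ν b` are integers that
are `1` and `2` modulo `3` in some order, and `a / b` is their ratio.
-/

open Complex Real ComplexConjugate MeasureTheory

lemma cexp_two_pi_mul_I_mul_eq_one_iff (t : ℝ) :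
    cexp (2 * π * I * t) = 1 ↔ ∃ n : ℤ, t = n := by
  rw [Complex.exp_eq_one_iff]
  refine ⟨fun ⟨n, hn⟩ ↦ ⟨n, ?_⟩, fun ⟨n, hn⟩ ↦ ⟨n, by rw [hn]; push_cast; ring⟩⟩
  exact_mod_cast mul_left_cancel₀ two_pi_I_ne_zero (hn.trans (mul_comm _ _))

lemma cexp_two_pi_mul_I_mul_add (u v : ℝ) :
    cexp (2 * π * I * ↑(u + v)) = cexp (2 * π * I * u) * cexp (2 * π * I * v) := by
  rw [← Complex.exp_add]; push_cast; ring_nf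

lemma norm_cexp_two_pi_mul_I_mul (t : ℝ) : ‖cexp (2 * π * I * t)‖ = 1 := by
  simp [Complex.norm_exp]

lemma cexp_two_pi_mul_I_mul_eq_pow {u : ℝ} {j : ℕ} {m : ℤ} (hu : 3 * u = j + 3 * m) :
    cexp (2 * π * I * u) = cexp (2 * π * I / 3) ^ j := by
  have hu' : (u : ℂ) = (j + 3 * m) / 3 := by
    rw [eq_div_iff three_ne_zero, mul_comm]; exact_mod_cast hu
  rw [hu', show 2 * π * I * ((j + 3 * m) / 3) = j * (2 * π * I / 3) + m * (2 * π * I) by ring,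
    Complex.exp_add, ← Complex.exp_nat_mul, exp_int_mul_two_pi_mul_I, mul_one]

lemma Complex.mul_eq_one_of_one_add_add_eq_zero {z w : ℂ} (hz : ‖z‖ = 1) (hw : ‖w‖ = 1)
    (h : 1 + z + w = 0) : z * w = 1 := by
  have hz0 : z ≠ 0 := norm_ne_zero_iff.mp (by rw [hz]; exact one_ne_zero)
  have hw0 : w ≠ 0 := norm_ne_zero_iff.mp (by rw [hw]; exact one_ne_zero)
  have hconj : 1 + z⁻¹ + w⁻¹ = 0 := by
    rw [inv_eq_conj hz, inv_eq_conj hw]; simpa using congrArg conj h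
  field_simp at hconj
  linear_combination hconj - h

theorem one_add_cexp_add_cexp_eq_zero_iff (t s : ℝ) :
    1 + cexp (2 * π * I * t) + cexp (2 * π * I * s) = 0 ↔
      ∃ m k : ℤ, (3 * t = 1 + 3 * m ∧ 3 * s = 2 + 3 * k) ∨
        (3 * t = 2 + 3 * k ∧ 3 * s = 1 + 3 * m) := by
  constructor
  · intro h
    have hzw := mul_eq_one_of_one_add_add_eq_zero (norm_cexp_two_pi_mul_I_mul t)
      (norm_cexp_two_pi_mul_I_mul s) h
    obtain ⟨N, hN⟩ : ∃ N : ℤ, t + s = N := by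
      rw [← cexp_two_pi_mul_I_mul_eq_one_iff, cexp_two_pi_mul_I_mul_add, hzw]
    have hroot : cexp (2 * π * I * t) ^ 2 + cexp (2 * π * I * t) + 1 = 0 := by
      linear_combination cexp (2 * π * I * t) * h - hzw
    obtain ⟨p, hp⟩ : ∃ p : ℤ, 3 * t = p := by
      rw [← cexp_two_pi_mul_I_mul_eq_one_iff]; push_cast
      rw [show 2 * π * I * (3 * t) = ((3 : ℕ) : ℂ) * (2 * π * I * t) by push_cast; ring,
        Complex.exp_nat_mul]
      linear_combination (cexp (2 * π * I * t) - 1) * hroot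
    have hp3 : ¬ 3 ∣ p := by
      rintro ⟨j, rfl⟩
      have : cexp (2 * π * I * t) = 1 :=
        (cexp_two_pi_mul_I_mul_eq_one_iff t).mpr ⟨j, by push_cast at hp; linarith⟩
      rw [this] at hroot
      norm_num at hroot
    have hs : 3 * s = ((3 * N - p : ℤ) : ℝ) := by push_cast; linarith
    rcases (by omega : p % 3 = 1 ∨ p % 3 = 2) with hp1 | hp2
    · refine ⟨p / 3, (3 * N - p) / 3, Or.inl ⟨?_, ?_⟩⟩
      · rw [hp]; exact_mod_cast (by omega : p = 1 + 3 * (p / 3))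
      · rw [hs]; exact_mod_cast (by omega : 3 * N - p = 2 + 3 * ((3 * N - p) / 3))
    · refine ⟨(3 * N - p) / 3, p / 3, Or.inr ⟨?_, ?_⟩⟩
      · rw [hp]; exact_mod_cast (by omega : p = 2 + 3 * (p / 3))
      · rw [hs]; exact_mod_cast (by omega : 3 * N - p = 1 + 3 * ((3 * N - p) / 3))
  · have hω : 1 + cexp (2 * π * I / 3) + cexp (2 * π * I / 3) ^ 2 = 0 := by
      have := (Complex.isPrimitiveRoot_exp 3 three_ne_zero).geom_sum_eq_zero (by norm_num)
      simpa [Finset.sum_range_succ] using this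
    rintro ⟨m, k, ⟨ht, hs⟩ | ⟨ht, hs⟩⟩
    · rw [cexp_two_pi_mul_I_mul_eq_pow (j := 1) (m := m) (by exact_mod_cast ht),
        cexp_two_pi_mul_I_mul_eq_pow (j := 2) (m := k) (by exact_mod_cast hs)]
      linear_combination hω
    · rw [cexp_two_pi_mul_I_mul_eq_pow (j := 2) (m := k) (by exact_mod_cast ht),
        cexp_two_pi_mul_I_mul_eq_pow (j := 1) (m := m) (by exact_mod_cast hs)]
      linear_combination hω

namespace AddCircle

variable {T : ℝ}

lemma fourier_apply_add (n : ℤ) (x y : AddCircle T) :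
    fourier n (x + y) = fourier n x * fourier n y := by
  simp only [fourier_apply, smul_add, toCircle_add, Circle.coe_mul]

variable [Fact (0 < T)]

lemma fourierCoeff_comp_add_right {E : Type*} [NormedAddCommGroup E] [NormedSpace ℂ E]
    (f : AddCircle T → E) (c : AddCircle T) (n : ℤ) :
    fourierCoeff (fun x ↦ f (x + c)) n = fourier n c • fourierCoeff f n := by
  have hc : fourier n c * fourier (-n) c = 1 := by
    rw [← fourier_add, add_neg_cancel, fourier_zero]
  rw [fourierCoeff, fourierCoeff, ← integral_smul,
    ← integral_add_right_eq_self (fun t ↦ fourier n c • fourier (-n) t • f t) c]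
  congr 1 with t
  rw [smul_smul, fourier_apply_add, mul_left_comm, hc, mul_one]

lemma eq_zero_of_fourierCoeff_eq_zero {f : C(AddCircle T, ℂ)} (h : ∀ n, fourierCoeff f n = 0) :
    f = 0 := by
  have hf := hasSum_fourier_series_of_summable (f := f) ((funext h).symm ▸ summable_zero)
  simp only [h, zero_smul] at hf
  exact hf.unique hasSum_zero

lemma exists_one_add_fourier_add_fourier_eq_zero {f : C(AddCircle T, ℂ)} (hf : f ≠ 0)
    {α β : AddCircle T} (h : ∀ x, f x + f (x + α) + f (x + β) = 0) :
    ∃ n : ℤ, 1 + fourier n α + fourier n β = 0 := by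
  obtain ⟨n, hn⟩ : ∃ n, fourierCoeff f n ≠ 0 := by
    by_contra! h0
    exact hf (eq_zero_of_fourierCoeff_eq_zero h0)
  refine ⟨n, (mul_eq_zero.mp ?_).resolve_right hn⟩
  have hint : ∀ c : AddCircle T, Integrable (fun x ↦ f (x + c)) haarAddCircle := fun c ↦
    (f.continuous.comp (continuous_add_const c)).integrable_of_hasCompactSupport
      (.of_compactSpace _)
  have hsum : fourierCoeff (fun x ↦ f (x + 0) + f (x + α) + f (x + β)) n = 0 := by
    simp only [add_zero, h]
    simp [fourierCoeff]
  rw [← Pi.add_def, ← Pi.add_def, fourierCoeff.add ((hint 0).add (hint α)) (hint β),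
    fourierCoeff.add (hint 0) (hint α)] at hsum
  simp only [Pi.add_apply, fourierCoeff_comp_add_right, smul_eq_mul, fourier_eval_zero] at hsum
  linear_combination hsum

end AddCircle

lemma exists_one_add_cexp_add_cexp_eq_zero_of_periodic {a b T : ℝ} {g : ℝ → ℝ}
    (hg : Continuous g) (hg0 : g ≠ 0) (hT : 0 < T) (hper : ∀ x, g (x + T) = g x)
    (h : ∀ x, g x + g (x + a) + g (x + b) = 0) :
    ∃ ν : ℝ, 1 + cexp (2 * π * I * ↑(ν * a)) + cexp (2 * π * I * ↑(ν * b)) = 0 := by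
  have : Fact (0 < T) := ⟨hT⟩
  have hper' : Function.Periodic (fun x ↦ (g x : ℂ)) T := fun x ↦ by simp only [hper]
  let F : C(AddCircle T, ℂ) :=
    ⟨hper'.lift, continuous_coinduced_dom.mpr (continuous_ofReal.comp hg)⟩
  have hF0 : F ≠ 0 := fun hF ↦ hg0 <| funext fun x ↦ by
    simpa [F] using DFunLike.congr_fun hF (x : AddCircle T)
  obtain ⟨n, hn⟩ := AddCircle.exists_one_add_fourier_add_fourier_eq_zero hF0
    (α := a) (β := b) fun x ↦ by
      induction x using QuotientAddGroup.induction_on with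
      | H x =>
        show (g x : ℂ) + g (x + a) + g (x + b) = 0
        exact_mod_cast h x
  refine ⟨n / T, ?_⟩
  simp only [fourier_coe_apply] at hn
  convert hn using 3 <;> push_cast <;> ring_nf

theorem exists_periodic_solution_iff (a b : ℝ) :
    (∃ g : ℝ → ℝ, Continuous g ∧ g ≠ 0 ∧ (∃ T > (0 : ℝ), ∀ x : ℝ, g (x + T) = g x) ∧
        ∀ x : ℝ, g x + g (x + a) + g (x + b) = 0) ↔
      ∃ ν : ℝ, 1 + cexp (2 * π * I * ↑(ν * a)) + cexp (2 * π * I * ↑(ν * b)) = 0 := by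
  constructor
  · rintro ⟨g, hg, hg0, ⟨T, hT, hper⟩, h⟩
    exact exists_one_add_cexp_add_cexp_eq_zero_of_periodic hg hg0 hT hper h
  · rintro ⟨ν, hν⟩
    have hν0 : ν ≠ 0 := by
      rintro rfl
      norm_num at hν
    have hper : cexp (2 * π * I * ↑(ν * |ν|⁻¹)) = 1 := by
      rw [cexp_two_pi_mul_I_mul_eq_one_iff]
      rcases abs_choice ν with h | h <;> rw [h]
      · exact ⟨1, by simp [hν0]⟩
      · exact ⟨-1, by simp [hν0]⟩
    refine ⟨fun x ↦ (cexp (2 * π * I * ↑(ν * x))).re, by fun_prop, fun h0 ↦ ?_,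
      ⟨|ν|⁻¹, by positivity, fun x ↦ ?_⟩, fun x ↦ ?_⟩
    · simpa using congr_fun h0 0
    · simp only [mul_add, cexp_two_pi_mul_I_mul_add, hper, mul_one]
    · have := congrArg (fun z ↦ (cexp (2 * π * I * ↑(ν * x)) * z).re) hν
      simp only [mul_add, cexp_two_pi_mul_I_mul_add]
      simpa [mul_add, add_re] using this

lemma one_add_three_mul_intCast_ne_zero (m : ℤ) : (1 + 3 * m : ℝ) ≠ 0 := by
  exact_mod_cast (by omega : 1 + 3 * m ≠ 0)

lemma two_add_three_mul_intCast_ne_zero (k : ℤ) : (2 + 3 * k : ℝ) ≠ 0 := by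
  exact_mod_cast (by omega : 2 + 3 * k ≠ 0)

lemma exists_three_mul_mul_eq_iff_div_eq {a b p q : ℝ} (hp : p ≠ 0) (hq : q ≠ 0) :
    (∃ ν : ℝ, 3 * (ν * a) = p ∧ 3 * (ν * b) = q) ↔ a / b = p / q := by
  constructor
  · rintro ⟨ν, ha, hb⟩
    have hν : 3 * ν ≠ 0 := fun h ↦ hq (by rw [← hb, ← mul_assoc, h, zero_mul])
    rw [← ha, ← hb, ← mul_assoc, ← mul_assoc, mul_div_mul_left a b hν]
  · intro h
    have hb : b ≠ 0 := by
      rintro rfl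
      rw [div_zero, eq_comm, div_eq_zero_iff] at h
      tauto
    refine ⟨q / (3 * b), ?_, by field_simp⟩
    rw [div_eq_div_iff hb hq] at h
    field_simp
    linarith

theorem exists_one_add_cexp_add_cexp_eq_zero_iff (a b : ℝ) :
    (∃ ν : ℝ, 1 + cexp (2 * π * I * ↑(ν * a)) + cexp (2 * π * I * ↑(ν * b)) = 0) ↔
      ∃ m k : ℤ, a / b = (2 + 3 * (k : ℝ)) / (1 + 3 * (m : ℝ)) ∨
        a / b = (1 + 3 * (m : ℝ)) / (2 + 3 * (k : ℝ)) := by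
  simp only [one_add_cexp_add_cexp_eq_zero_iff]
  rw [exists_comm]
  refine exists_congr fun m ↦ ?_
  rw [exists_comm]
  refine exists_congr fun k ↦ ?_
  have hm := one_add_three_mul_intCast_ne_zero m
  have hk := two_add_three_mul_intCast_ne_zero k
  rw [exists_or, exists_three_mul_mul_eq_iff_div_eq hm hk, exists_three_mul_mul_eq_iff_div_eq hk hm,
    or_comm]

theorem stmt_17_general (a b : ℝ) :
    (∃ g : ℝ → ℝ, Continuous g ∧ g ≠ 0 ∧ (∃ T > (0 : ℝ), ∀ x : ℝ, g (x + T) = g x) ∧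
        ∀ x : ℝ, g x + g (x + a) + g (x + b) = 0) ↔
      ∃ m k : ℤ,
        a / b = (2 + 3 * (k : ℝ)) / (1 + 3 * (m : ℝ)) ∨
        a / b = (1 + 3 * (m : ℝ)) / (2 + 3 * (k : ℝ)) :=
  (exists_periodic_solution_iff a b).trans (exists_one_add_cexp_add_cexp_eq_zero_iff a b)

/-- for `a, b > 0`, the equation `g x + g (x + a) + g (x + b) = 0` admits
a nonzero continuous periodic solution iff
`a / b ∈ {(2+3k)/(1+3m) : m, k ∈ ℤ} ∪ {(1+3m)/(2+3k) : m, k ∈ ℤ}`. -/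
theorem stmt_17 (a b : ℝ) (ha : 0 < a) (hb : 0 < b) :
    (∃ g : ℝ → ℝ, Continuous g ∧ g ≠ 0 ∧ (∃ T > (0 : ℝ), ∀ x : ℝ, g (x + T) = g x) ∧
        ∀ x : ℝ, g x + g (x + a) + g (x + b) = 0) ↔
      ∃ m k : ℤ,
        a / b = (2 + 3 * (k : ℝ)) / (1 + 3 * (m : ℝ)) ∨
        a / b = (1 + 3 * (m : ℝ)) / (2 + 3 * (k : ℝ)) :=
  stmt_17_general a b
end
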